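/- Idealized estimator, negative alignment case: In the setting of the idealized estimator (v maximizes u^T A u over K ∩ S^{p-1}, A = Ā + E, x̄ the unit top eigenvector of Ā with eigengap ν > 0), if v^T x̄ ≤ 0 then ‖v + x̄‖ ≤ min( sqrt(4‖E‖_K/ν), 8‖E‖_K/ν ). -/

import Mathlib

/-! Comparing the objective at `v` and at `xbar` gives
`xbarᵀ Abar xbar - vᵀ Abar v ≤ vᵀ E v - xbarᵀ E xbar`. When `v ⬝ᵥ xbar ≤ 0` the eigengap bounds
the left side below by `(lam - mu) / 2 * ‖v + xbar‖ ^ 2`. The right side is at most `2 ‖E‖_K`,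
and, rewritten as `vᵀ E (v + xbar) - (v + xbar)ᵀ E xbar` with `v + xbar ∈ K`, also at most
`2 ‖E‖_K ‖v + xbar‖`. -/

open Matrix

/-- Euclidean norm of a vector in `Fin p → ℝ`. -/
noncomputable def vecEnorm {p : ℕ} (v : Fin p → ℝ) : ℝ := Real.sqrt (v ⬝ᵥ v)

/-- The cone-restricted operator seminorm
`‖E‖_C = sup_{x,y ∈ C, ‖x‖=‖y‖=1} |xᵀ E y|`. -/
noncomputable def coneNorm {p : ℕ} (C : Set (Fin p → ℝ)) (E : Matrix (Fin p) (Fin p) ℝ) : ℝ :=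
  sSup {r : ℝ | ∃ x ∈ C, ∃ y ∈ C, vecEnorm x = 1 ∧ vecEnorm y = 1 ∧ r = |x ⬝ᵥ E.mulVec y|}

section VecEnorm

variable {p : ℕ}

lemma dotProduct_self_nonneg (v : Fin p → ℝ) : 0 ≤ v ⬝ᵥ v := by
  simpa using dotProduct_self_star_nonneg v

lemma vecEnorm_nonneg (v : Fin p → ℝ) : 0 ≤ vecEnorm v := Real.sqrt_nonneg _

lemma vecEnorm_sq (v : Fin p → ℝ) : vecEnorm v ^ 2 = v ⬝ᵥ v :=
  Real.sq_sqrt (dotProduct_self_nonneg v)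

lemma vecEnorm_pos {v : Fin p → ℝ} (hv : v ≠ 0) : 0 < vecEnorm v :=
  Real.sqrt_pos.2 <| (dotProduct_self_nonneg v).lt_of_ne' (dotProduct_self_eq_zero.not.2 hv)

lemma vecEnorm_smul (c : ℝ) (v : Fin p → ℝ) : vecEnorm (c • v) = |c| * vecEnorm v := by
  rw [vecEnorm, smul_dotProduct, dotProduct_smul, smul_eq_mul, smul_eq_mul, ← mul_assoc,
    Real.sqrt_mul (mul_self_nonneg c), Real.sqrt_mul_self_eq_abs, vecEnorm]

lemma vecEnorm_inv_smul_self {v : Fin p → ℝ} (hv : v ≠ 0) :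
    vecEnorm ((vecEnorm v)⁻¹ • v) = 1 := by
  rw [vecEnorm_smul, abs_inv, abs_of_pos (vecEnorm_pos hv), inv_mul_cancel₀ (vecEnorm_pos hv).ne']

lemma vecEnorm_add_sq_of_unit {v x : Fin p → ℝ} (hv : vecEnorm v = 1) (hx : vecEnorm x = 1) :
    vecEnorm (v + x) ^ 2 = 2 + 2 * (v ⬝ᵥ x) := by
  rw [vecEnorm_sq, add_dotProduct, dotProduct_add, dotProduct_add, ← vecEnorm_sq v,
    ← vecEnorm_sq x, hv, hx, dotProduct_comm x v]
  ring

lemma abs_dotProduct_le_vecEnorm_mul (a b : Fin p → ℝ) :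
    |a ⬝ᵥ b| ≤ vecEnorm a * vecEnorm b := by
  rw [← Real.sqrt_sq_eq_abs, vecEnorm, vecEnorm, ← Real.sqrt_mul (dotProduct_self_nonneg a)]
  exact Real.sqrt_le_sqrt <| by
    simpa only [dotProduct, sq] using Finset.sum_mul_sq_le_sq_mul_sq Finset.univ a b

lemma vecEnorm_mulVec_le (E : Matrix (Fin p) (Fin p) ℝ) (y : Fin p → ℝ) :
    vecEnorm (E *ᵥ y) ≤ Real.sqrt (∑ i, E i ⬝ᵥ E i) * vecEnorm y := by
  rw [vecEnorm, vecEnorm,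
    ← Real.sqrt_mul (Finset.sum_nonneg fun i _ => dotProduct_self_nonneg (E i))]
  refine Real.sqrt_le_sqrt ?_
  calc E *ᵥ y ⬝ᵥ E *ᵥ y = ∑ i, (E i ⬝ᵥ y) ^ 2 := by simp only [dotProduct, mulVec, sq]
    _ ≤ ∑ i, (E i ⬝ᵥ E i) * (y ⬝ᵥ y) := Finset.sum_le_sum fun i _ => by
        rw [← vecEnorm_sq, ← vecEnorm_sq, ← mul_pow, ← sq_abs]
        gcongr
        exact abs_dotProduct_le_vecEnorm_mul _ _
    _ = (∑ i, E i ⬝ᵥ E i) * (y ⬝ᵥ y) := (Finset.sum_mul ..).symm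

end VecEnorm

section ConeNorm

variable {p : ℕ} (E : Matrix (Fin p) (Fin p) ℝ)

lemma bddAbove_coneNorm_set (C : Set (Fin p → ℝ)) :
    BddAbove {r : ℝ | ∃ x ∈ C, ∃ y ∈ C, vecEnorm x = 1 ∧ vecEnorm y = 1 ∧
      r = |x ⬝ᵥ E *ᵥ y|} := by
  refine ⟨Real.sqrt (∑ i, E i ⬝ᵥ E i), ?_⟩
  rintro r ⟨x, -, y, -, hx, hy, rfl⟩
  calc |x ⬝ᵥ E *ᵥ y| ≤ vecEnorm x * vecEnorm (E *ᵥ y) := abs_dotProduct_le_vecEnorm_mul _ _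
    _ ≤ Real.sqrt (∑ i, E i ⬝ᵥ E i) := by
        simpa [hx, hy] using vecEnorm_mulVec_le E y

lemma abs_dotProduct_mulVec_le_coneNorm {C : Set (Fin p → ℝ)} {x y : Fin p → ℝ}
    (hx : x ∈ C) (hy : y ∈ C) (hx1 : vecEnorm x = 1) (hy1 : vecEnorm y = 1) :
    |x ⬝ᵥ E *ᵥ y| ≤ coneNorm C E :=
  le_csSup (bddAbove_coneNorm_set E C) ⟨x, hx, y, hy, hx1, hy1, rfl⟩

lemma abs_dotProduct_mulVec_le_coneNorm_mul {K : ConvexCone ℝ (Fin p → ℝ)} {x y : Fin p → ℝ}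
    (hx : x ∈ K) (hy : y ∈ K) :
    |x ⬝ᵥ E *ᵥ y| ≤ coneNorm K E * (vecEnorm x * vecEnorm y) := by
  rcases eq_or_ne x 0 with rfl | hx0
  · simp [vecEnorm]
  rcases eq_or_ne y 0 with rfl | hy0
  · simp [vecEnorm]
  have ha := vecEnorm_pos hx0
  have hb := vecEnorm_pos hy0
  have key := abs_dotProduct_mulVec_le_coneNorm E (K.smul_mem (inv_pos.2 ha) hx)
    (K.smul_mem (inv_pos.2 hb) hy) (vecEnorm_inv_smul_self hx0) (vecEnorm_inv_smul_self hy0)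
  rw [mulVec_smul, dotProduct_smul, smul_dotProduct, smul_eq_mul, smul_eq_mul, abs_mul,
    abs_mul, abs_inv, abs_inv, abs_of_pos ha, abs_of_pos hb, inv_mul_le_iff₀ hb,
    inv_mul_le_iff₀ ha] at key
  linarith

lemma dotProduct_mulVec_sub_le_coneNorm_mul {K : ConvexCone ℝ (Fin p → ℝ)} {v x : Fin p → ℝ}
    (hv : v ∈ K) (hx : x ∈ K) :
    v ⬝ᵥ E *ᵥ v - x ⬝ᵥ E *ᵥ x ≤ coneNorm K E * ((vecEnorm v + vecEnorm x) * vecEnorm (v + x)) := by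
  have hvx := K.add_mem hv hx
  have h₁ := abs_le.1 (abs_dotProduct_mulVec_le_coneNorm_mul E hv hvx)
  have h₂ := abs_le.1 (abs_dotProduct_mulVec_le_coneNorm_mul E hvx hx)
  have hsplit : v ⬝ᵥ E *ᵥ v - x ⬝ᵥ E *ᵥ x = v ⬝ᵥ E *ᵥ (v + x) - (v + x) ⬝ᵥ E *ᵥ x := by
    rw [mulVec_add, dotProduct_add, add_dotProduct]
    ring
  rw [hsplit]
  linarith

end ConeNorm

section Spectral

variable {p : ℕ} {Abar : Matrix (Fin p) (Fin p) ℝ} {lam mu : ℝ} {xbar : Fin p → ℝ}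

lemma dotProduct_mulVec_le_of_orthogonal
    (hmu : ∀ y : Fin p → ℝ, vecEnorm y = 1 → y ⬝ᵥ xbar = 0 → y ⬝ᵥ Abar *ᵥ y ≤ mu)
    {w : Fin p → ℝ} (hw : w ⬝ᵥ xbar = 0) : w ⬝ᵥ Abar *ᵥ w ≤ mu * (w ⬝ᵥ w) := by
  rcases eq_or_ne w 0 with rfl | hw0
  · simp
  have ha := vecEnorm_pos hw0
  have key := hmu _ (vecEnorm_inv_smul_self hw0) (by rw [smul_dotProduct, hw, smul_zero])
  rw [mulVec_smul, dotProduct_smul, smul_dotProduct, smul_eq_mul, smul_eq_mul, ← mul_assoc,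
    ← sq, inv_pow, inv_mul_le_iff₀ (by positivity), vecEnorm_sq] at key
  linarith

/-- With `w := v - (v ⬝ᵥ xbar) • xbar`, symmetry and the eigen-equation kill the cross terms:
`vᵀ Abar v = wᵀ Abar w + lam (v ⬝ᵥ xbar) ^ 2`. -/
lemma dotProduct_mulVec_le_of_eigengap (hA : Abar.IsSymm) (heig : Abar *ᵥ xbar = lam • xbar)
    (hxbar : vecEnorm xbar = 1)
    (hmu : ∀ y : Fin p → ℝ, vecEnorm y = 1 → y ⬝ᵥ xbar = 0 → y ⬝ᵥ Abar *ᵥ y ≤ mu)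
    (v : Fin p → ℝ) :
    v ⬝ᵥ Abar *ᵥ v ≤ mu * (v ⬝ᵥ v) + (lam - mu) * (v ⬝ᵥ xbar) ^ 2 := by
  set c := v ⬝ᵥ xbar
  set w := v - c • xbar
  have hxx : xbar ⬝ᵥ xbar = 1 := by rw [← vecEnorm_sq, hxbar, one_pow]
  have hwx : w ⬝ᵥ xbar = 0 := by
    rw [sub_dotProduct, smul_dotProduct, hxx, smul_eq_mul, mul_one, sub_self]
  have hwAx : w ⬝ᵥ Abar *ᵥ xbar = 0 := by rw [heig, dotProduct_smul, hwx, smul_zero]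
  have hxAw : xbar ⬝ᵥ Abar *ᵥ w = 0 := by
    rw [← hwAx, ← dotProduct_transpose_mulVec, hA.eq]
  have hxAx : xbar ⬝ᵥ Abar *ᵥ xbar = lam := by
    rw [heig, dotProduct_smul, hxx, smul_eq_mul, mul_one]
  have hv : v = w + c • xbar := (sub_add_cancel v _).symm
  have hww : w ⬝ᵥ w = v ⬝ᵥ v - c ^ 2 := by
    conv_rhs => rw [hv]
    simp only [add_dotProduct, dotProduct_add, smul_dotProduct, dotProduct_smul, smul_eq_mul,
      hwx, hxx, dotProduct_comm xbar w]
    ring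
  have hvAv : v ⬝ᵥ Abar *ᵥ v = w ⬝ᵥ Abar *ᵥ w + lam * c ^ 2 := by
    conv_lhs => rw [hv]
    simp only [mulVec_add, mulVec_smul, add_dotProduct, dotProduct_add, smul_dotProduct,
      dotProduct_smul, smul_eq_mul, hwAx, hxAw, hxAx]
    ring
  have hwAw := dotProduct_mulVec_le_of_orthogonal hmu hwx
  rw [hww] at hwAw
  rw [hvAv]
  linarith

lemma half_eigengap_mul_vecEnorm_add_sq_le (hA : Abar.IsSymm) (heig : Abar *ᵥ xbar = lam • xbar)
    (hxbar : vecEnorm xbar = 1)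
    (hmu : ∀ y : Fin p → ℝ, vecEnorm y = 1 → y ⬝ᵥ xbar = 0 → y ⬝ᵥ Abar *ᵥ y ≤ mu)
    (hml : mu ≤ lam) {v : Fin p → ℝ} (hv : vecEnorm v = 1) (halign : v ⬝ᵥ xbar ≤ 0) :
    (lam - mu) / 2 * vecEnorm (v + xbar) ^ 2 ≤ xbar ⬝ᵥ Abar *ᵥ xbar - v ⬝ᵥ Abar *ᵥ v := by
  have hxAx : xbar ⬝ᵥ Abar *ᵥ xbar = lam := by
    rw [heig, dotProduct_smul, ← vecEnorm_sq, hxbar, smul_eq_mul, one_pow, mul_one]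
  have hquad := dotProduct_mulVec_le_of_eigengap hA heig hxbar hmu v
  have hsum := vecEnorm_add_sq_of_unit hv hxbar
  rw [← vecEnorm_sq, hv, one_pow] at hquad
  rw [hxAx, hsum]
  -- with `c := v ⬝ᵥ xbar`: `1 - c ^ 2 ≥ 1 + c` on `[-1, 0]`,
  -- and `c ≥ -1` because `‖v + xbar‖ ^ 2 = 2 + 2c`
  nlinarith [sq_nonneg (vecEnorm (v + xbar)), mul_nonneg (sub_nonneg.2 hml)
    (mul_nonneg (neg_nonneg.2 halign) (show 0 ≤ 1 + v ⬝ᵥ xbar by nlinarith))]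

end Spectral

lemma le_min_of_half_mul_sq_le {ν ε t : ℝ} (hν : 0 < ν) (ht : 0 ≤ t)
    (h₁ : ν / 2 * t ^ 2 ≤ 2 * ε) (h₂ : ν / 2 * t ^ 2 ≤ 2 * ε * t) :
    t ≤ min (Real.sqrt (4 * ε / ν)) (8 * ε / ν) := by
  refine le_min (Real.le_sqrt_of_sq_le ?_) ?_
  · rw [le_div_iff₀ hν]
    linarith
  · rcases ht.eq_or_lt with rfl | htpos
    · rw [le_div_iff₀ hν]
      linarith
    · have : ν / 2 * t ≤ 2 * ε := by nlinarith
      rw [le_div_iff₀ hν]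
      nlinarith

/-- Error bound for the idealized estimator `v ∈ argmax_{u ∈ K ∩ S} uᵀ A u` with
`A = Ā + E`, in the negative-alignment case `vᵀ x̄ ≤ 0`:
`‖v + x̄‖ ≤ min( √(4‖E‖_K/ν), 8‖E‖_K/ν )` where `ν = λ - μ`. -/
theorem idealized_estimator_error_neg {p : ℕ}
    (K : ConvexCone ℝ (Fin p → ℝ))
    (Abar E A : Matrix (Fin p) (Fin p) ℝ) (hAbar : Abar.PosSemidef)
    (hAdef : A = Abar + E)
    (lam mu : ℝ) (xbar : Fin p → ℝ)
    (hxbarK : xbar ∈ K) (hxbar : vecEnorm xbar = 1)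
    (heig : Abar.mulVec xbar = lam • xbar)
    (hml : mu < lam)
    (hmu : ∀ y : Fin p → ℝ, vecEnorm y = 1 → y ⬝ᵥ xbar = 0 → y ⬝ᵥ Abar.mulVec y ≤ mu)
    (v : Fin p → ℝ) (hvK : v ∈ K) (hv : vecEnorm v = 1)
    (hmax : ∀ u ∈ K, vecEnorm u = 1 → u ⬝ᵥ A.mulVec u ≤ v ⬝ᵥ A.mulVec v)
    (halign : v ⬝ᵥ xbar ≤ 0) :
    vecEnorm (v + xbar) ≤
      min (Real.sqrt (4 * coneNorm (K : Set (Fin p → ℝ)) E / (lam - mu)))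
        (8 * coneNorm (K : Set (Fin p → ℝ)) E / (lam - mu)) := by
  have hgap := half_eigengap_mul_vecEnorm_add_sq_le
    (isHermitian_iff_isSymm.1 hAbar.isHermitian) heig hxbar hmu hml.le hv halign
  have hopt : xbar ⬝ᵥ Abar *ᵥ xbar - v ⬝ᵥ Abar *ᵥ v ≤ v ⬝ᵥ E *ᵥ v - xbar ⬝ᵥ E *ᵥ xbar := by
    have := hmax xbar hxbarK hxbar
    simp only [hAdef, add_mulVec, dotProduct_add] at this
    linarith
  have hEv := abs_le.1 (abs_dotProduct_mulVec_le_coneNorm E hvK hvK hv hv)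
  have hEx := abs_le.1 (abs_dotProduct_mulVec_le_coneNorm E hxbarK hxbarK hxbar hxbar)
  have hEsum := dotProduct_mulVec_sub_le_coneNorm_mul E hvK hxbarK
  rw [hv, hxbar] at hEsum
  exact le_min_of_half_mul_sq_le (sub_pos.2 hml) (vecEnorm_nonneg _) (by linarith) (by linarith)
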